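/- Let K ≥ 1, let (Ω, P) be a probability space, let B_1,…,B_K be {0,1}-valued random variables with P(B_k = 1) = q_k ∈ [0,1], and let X_1,…,X_K be square-integrable mean-zero random vectors with values in a finite-dimensional real inner product space E, such that the family (B_1,…,B_K, X_1,…,X_K) is mutually independent. Then E[ 1_{∑_k B_k ≥ 1} · ‖∑_{k=1}^K B_k X_k‖² / (∑_{k=1}^K B_k)² ] = ∑_{k=1}^K e_k · E[‖X_k‖²], where e_k = ∑_{S ⊆ {1,…,K}, k ∈ S} (1/|S|²) · ∏_{i∈S} q_i · ∏_{j∉S} (1 − q_j). -/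

import Mathlib

open Finset MeasureTheory ProbabilityTheory

/-- Type family used to express mutual independence of the joint family
`(B_1, …, B_K, X_1, …, X_K)`, where the `B_k` are real-valued and the `X_k` take values
in `E`. -/
def mixType4 (E : Type) (K : ℕ) : Fin K ⊕ Fin K → Type
  | Sum.inl _ => ℝ
  | Sum.inr _ => E

/-- The joint family `(B_1, …, B_K, X_1, …, X_K)` as a single indexed family. -/
def mixFun4 {Ω : Type*} {E : Type} {K : ℕ} (B : Fin K → Ω → ℝ) (X : Fin K → Ω → E) :
    (j : Fin K ⊕ Fin K) → Ω → mixType4 E K j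
  | Sum.inl i => B i
  | Sum.inr i => X i

/-- The measurable-space structures on the members of the joint family. -/
def mixMeas4 (E : Type) [mE : MeasurableSpace E] (K : ℕ) :
    (j : Fin K ⊕ Fin K) → MeasurableSpace (mixType4 E K j)
  | Sum.inl _ => inferInstanceAs (MeasurableSpace ℝ)
  | Sum.inr _ => mE

/-- Identity coercion out of the left components of `mixType4`. -/
def projL4 {E : Type} {K : ℕ} (i : Fin K) (x : mixType4 E K (Sum.inl i)) : ℝ := x

/-- Identity coercion out of the right components of `mixType4`. -/
def projR4 {E : Type} {K : ℕ} (i : Fin K) (x : mixType4 E K (Sum.inr i)) : E := x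

/-- Second-moment identity: for `{0,1}`-valued `B_k` with `P(B_k = 1) = q_k` and
square-integrable mean-zero `X_k`, all mutually independent,
`E[1_{∑ B_k ≥ 1} ‖∑ B_k X_k‖²/(∑ B_k)²] = ∑_k e_k E[‖X_k‖²]` with
`e_k = ∑_{S ∋ k} (1/|S|²) ∏_{i∈S} q_i ∏_{j∉S} (1 - q_j)`. -/
theorem second_moment_identity
    {Ω : Type*} [MeasurableSpace Ω] (P : Measure Ω) [IsProbabilityMeasure P]
    {E : Type} [NormedAddCommGroup E] [InnerProductSpace ℝ E] [FiniteDimensional ℝ E]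
    [MeasurableSpace E] [BorelSpace E]
    (K : ℕ) (hK : 1 ≤ K) (B : Fin K → Ω → ℝ) (X : Fin K → Ω → E) (q : Fin K → ℝ)
    (hq : ∀ k, 0 ≤ q k ∧ q k ≤ 1)
    (hBmeas : ∀ k, Measurable (B k))
    (hB01 : ∀ k ω, B k ω = 0 ∨ B k ω = 1)
    (hBq : ∀ k, P {ω | B k ω = 1} = ENNReal.ofReal (q k))
    (hXmeas : ∀ k, Measurable (X k))
    (hXL2 : ∀ k, MemLp (X k) 2 P)
    (hXmean : ∀ k, ∫ ω, X k ω ∂P = 0)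
    (hindep : iIndepFun (m := mixMeas4 E K) (mixFun4 B X) P)
    (e : Fin K → ℝ)
    (he : ∀ k, e k =
      ∑ S ∈ (Finset.univ : Finset (Fin K)).powerset.filter (fun S => k ∈ S),
        (1 / (S.card : ℝ) ^ 2) * (∏ i ∈ S, q i) * ∏ j ∈ Sᶜ, (1 - q j)) :
    (∫ ω, (if 1 ≤ ∑ k : Fin K, B k ω then
        ‖∑ k : Fin K, B k ω • X k ω‖ ^ 2 / (∑ k : Fin K, B k ω) ^ 2 else 0) ∂P)
      = ∑ k : Fin K, e k * ∫ ω, ‖X k ω‖ ^ 2 ∂P := by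
  classical
  letI : ∀ j, MeasurableSpace (mixType4 E K j) := mixMeas4 E K
  set c : Finset (Fin K) → ℝ := fun S => 1 / (S.card : ℝ) ^ 2 with hc
  set ind : Finset (Fin K) → Ω → ℝ :=
    fun S ω => (∏ i ∈ S, B i ω) * ∏ j ∈ Sᶜ, (1 - B j ω) with hinddef
  set G : Finset (Fin K) → Ω → ℝ := fun S ω => ‖∑ k ∈ S, X k ω‖ ^ 2 with hGdef
  have hfmeas : ∀ j, @Measurable Ω (mixType4 E K j) _ (mixMeas4 E K j) (mixFun4 B X j) := by
    intro j
    cases j with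
    | inl i => exact hBmeas i
    | inr i => exact hXmeas i
  have hindmeas : ∀ S, Measurable (ind S) := by
    intro S
    exact ((Finset.measurable_prod _ fun i _ => hBmeas i).mul
      (Finset.measurable_prod _ fun j _ => (measurable_const.sub (hBmeas j))))
  have hind01 : ∀ S ω, ind S ω = 0 ∨ ind S ω = 1 := by
    intro S ω
    by_cases h1 : ∀ i ∈ S, B i ω = 1
    · by_cases h2 : ∀ j ∈ Sᶜ, B j ω = 0
      · right
        have e1 : ∏ i ∈ S, B i ω = 1 := Finset.prod_eq_one h1
        have e2 : ∏ j ∈ Sᶜ, (1 - B j ω) = 1 :=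
          Finset.prod_eq_one fun j hj => by rw [h2 j hj, sub_zero]
        simp only [hinddef, e1, e2, one_mul]
      · left
        push_neg at h2
        obtain ⟨j, hj, hj0⟩ := h2
        have hj1 : B j ω = 1 := (hB01 j ω).resolve_left hj0
        exact mul_eq_zero_of_right _ (Finset.prod_eq_zero hj (by rw [hj1, sub_self]))
    · left
      push_neg at h1
      obtain ⟨i, hi, hi1⟩ := h1
      have hi0 : B i ω = 0 := (hB01 i ω).resolve_right hi1
      exact mul_eq_zero_of_left (Finset.prod_eq_zero hi hi0) _
  have hGmemLp : ∀ S : Finset (Fin K), MemLp (fun ω => ∑ k ∈ S, X k ω) 2 P :=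
    fun S => memLp_finset_sum S fun k _ => hXL2 k
  have hGint : ∀ S : Finset (Fin K), Integrable (G S) P := by
    intro S
    have h := (hGmemLp S).integrable_norm_rpow two_ne_zero ENNReal.ofNat_ne_top
    refine h.congr (Filter.Eventually.of_forall fun ω => ?_)
    show ‖∑ k ∈ S, X k ω‖ ^ (2 : ENNReal).toReal = G S ω
    have h2 : ((2 : ENNReal)).toReal = ((2 : ℕ) : ℝ) := by norm_num
    rw [h2, Real.rpow_natCast]
  have hGmeas : ∀ S : Finset (Fin K), Measurable (G S) := by
    intro S
    exact (Finset.measurable_sum _ fun k _ => hXmeas k).norm.pow_const 2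
  -- independence of `ind S` and `G S`
  have hindepSG : ∀ S : Finset (Fin K), IndepFun (ind S) (G S) P := by
    intro S
    set SL : Finset (Fin K ⊕ Fin K) := Finset.univ.image Sum.inl with hSL
    set SR : Finset (Fin K ⊕ Fin K) := Finset.univ.image Sum.inr with hSR
    have hdisj : Disjoint SL SR := by
      rw [Finset.disjoint_left]
      rintro x hx hx'
      rw [hSL, Finset.mem_image] at hx
      rw [hSR, Finset.mem_image] at hx'
      obtain ⟨i, _, rfl⟩ := hx
      obtain ⟨j, _, hj⟩ := hx'
      exact Sum.inl_ne_inr hj.symm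
    have hbase := hindep.indepFun_finset SL SR hdisj hfmeas
    have hmemL : ∀ i : Fin K, Sum.inl i ∈ SL := fun i => by
      rw [hSL, Finset.mem_image]; exact ⟨i, Finset.mem_univ i, rfl⟩
    have hmemR : ∀ i : Fin K, Sum.inr i ∈ SR := fun i => by
      rw [hSR, Finset.mem_image]; exact ⟨i, Finset.mem_univ i, rfl⟩
    let φ : ((i : SL) → mixType4 E K i) → ℝ := fun g =>
      (∏ i ∈ S, projL4 i (g ⟨Sum.inl i, hmemL i⟩)) *
        ∏ j ∈ Sᶜ, (1 - projL4 j (g ⟨Sum.inl j, hmemL j⟩))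
    let ψ : ((i : SR) → mixType4 E K i) → ℝ := fun g =>
      ‖∑ k ∈ S, projR4 k (g ⟨Sum.inr k, hmemR k⟩)‖ ^ 2
    have hφ : Measurable φ := by
      refine Measurable.mul ?_ ?_
      · exact Finset.measurable_prod _ fun i _ => measurable_pi_apply _
      · exact Finset.measurable_prod _ fun j _ =>
          measurable_const.sub (measurable_pi_apply _)
    have hψ : Measurable ψ := by
      apply Measurable.pow_const
      apply Measurable.norm
      apply Finset.measurable_sum
      intro k _
      exact measurable_pi_apply _
    have hcomp := hbase.comp hφ hψ
    have h2 : ind S = φ ∘ (fun a (i : SL) => mixFun4 B X i a) := rfl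
    have h3 : G S = ψ ∘ (fun a (i : SR) => mixFun4 B X i a) := rfl
    rw [h2, h3]
    exact hcomp
  -- value of `∫ ind S`
  have hindval : ∀ S : Finset (Fin K),
      ∫ ω, ind S ω ∂P = (∏ i ∈ S, q i) * ∏ j ∈ Sᶜ, (1 - q j) := by
    intro S
    set A : Set Ω := ⋂ k, B k ⁻¹' ({if k ∈ S then 1 else 0} : Set ℝ) with hA
    have hAmeas : MeasurableSet A :=
      MeasurableSet.iInter fun k => (hBmeas k) (measurableSet_singleton _)
    have hindA : ∀ ω, ind S ω = Set.indicator A (fun _ => (1 : ℝ)) ω := by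
      intro ω
      by_cases hωA : ω ∈ A
      · have hval : ∀ k, B k ω = if k ∈ S then 1 else 0 := by
          intro k
          have := Set.mem_iInter.mp hωA k
          simpa using this
        rw [Set.indicator_of_mem hωA]
        have e1 : ∏ i ∈ S, B i ω = 1 :=
          Finset.prod_eq_one fun i hi => by rw [hval i, if_pos hi]
        have e2 : ∏ j ∈ Sᶜ, (1 - B j ω) = 1 :=
          Finset.prod_eq_one fun j hj => by
            rw [hval j, if_neg (Finset.mem_compl.mp hj), sub_zero]
        simp only [hinddef, e1, e2, one_mul]
      · rw [Set.indicator_of_notMem hωA]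
        rw [hA, Set.mem_iInter] at hωA
        push_neg at hωA
        obtain ⟨k, hk⟩ := hωA
        rw [Set.mem_preimage, Set.mem_singleton_iff] at hk
        by_cases hkS : k ∈ S
        · rw [if_pos hkS] at hk
          have h0 : B k ω = 0 := (hB01 k ω).resolve_right hk
          exact mul_eq_zero_of_left (Finset.prod_eq_zero hkS h0) _
        · rw [if_neg hkS] at hk
          have h1 : B k ω = 1 := (hB01 k ω).resolve_left hk
          exact mul_eq_zero_of_right _
            (Finset.prod_eq_zero (Finset.mem_compl.mpr hkS) (by rw [h1, sub_self]))
    have hPA : P A = ∏ k : Fin K, P (B k ⁻¹' ({if k ∈ S then 1 else 0} : Set ℝ)) := by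
      have key := hindep.measure_inter_preimage_eq_mul (Finset.univ.image Sum.inl)
        (sets := fun j => Sum.rec (motive := fun j => Set (mixType4 E K j))
          (fun k => ({if k ∈ S then 1 else 0} : Set ℝ)) (fun _ => Set.univ) j)
        (by
          intro i _
          cases i with
          | inl k => exact @measurableSet_singleton ℝ _ _ (if k ∈ S then 1 else 0)
          | inr k => exact MeasurableSet.univ)
      have hAeq : (⋂ i ∈ Finset.univ.image Sum.inl,
          mixFun4 B X i ⁻¹' (Sum.rec (motive := fun j => Set (mixType4 E K j))
            (fun k => ({if k ∈ S then 1 else 0} : Set ℝ)) (fun _ => Set.univ) i)) = A := by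
        rw [hA]
        ext ω
        simp only [Set.mem_iInter, Finset.mem_image, Finset.mem_univ, true_and]
        constructor
        · intro h k
          exact h (Sum.inl k) ⟨k, rfl⟩
        · rintro h i ⟨k, rfl⟩
          exact h k
      rw [hAeq] at key
      rw [key, Finset.prod_image (fun x _ y _ h => Sum.inl.inj h)]
      exact Finset.prod_congr rfl fun k _ => rfl
    have hfac : ∀ k : Fin K,
        (P (B k ⁻¹' ({if k ∈ S then 1 else 0} : Set ℝ))).toReal
          = if k ∈ S then q k else 1 - q k := by
      intro k
      by_cases hk : k ∈ S
      · rw [if_pos hk, if_pos hk]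
        have hset : B k ⁻¹' ({(1 : ℝ)} : Set ℝ) = {ω | B k ω = 1} := rfl
        rw [hset, hBq k, ENNReal.toReal_ofReal (hq k).1]
      · rw [if_neg hk, if_neg hk]
        have hset : B k ⁻¹' ({(0 : ℝ)} : Set ℝ) = {ω | B k ω = 1}ᶜ := by
          ext ω
          simp only [Set.mem_preimage, Set.mem_singleton_iff, Set.mem_compl_iff,
            Set.mem_setOf_eq]
          constructor
          · intro h h1
            rw [h1] at h
            norm_num at h
          · intro h
            exact (hB01 k ω).resolve_right h
        have hmeas1 : MeasurableSet {ω | B k ω = 1} := by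
          have : {ω | B k ω = 1} = B k ⁻¹' ({(1 : ℝ)} : Set ℝ) := rfl
          rw [this]
          exact (hBmeas k) (measurableSet_singleton _)
        rw [hset, prob_compl_eq_one_sub hmeas1, hBq k,
          ← ENNReal.ofReal_one, ← ENNReal.ofReal_sub _ (hq k).1,
          ENNReal.toReal_ofReal (by linarith [(hq k).2])]
    calc ∫ ω, ind S ω ∂P = ∫ ω, Set.indicator A (fun _ => (1 : ℝ)) ω ∂P :=
          integral_congr_ae (Filter.Eventually.of_forall hindA)
      _ = (P A).toReal := by
          rw [integral_indicator_const _ hAmeas]; simp [measureReal_def]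
      _ = ∏ k : Fin K, (P (B k ⁻¹' ({if k ∈ S then 1 else 0} : Set ℝ))).toReal := by
          rw [hPA, ENNReal.toReal_prod]
      _ = ∏ k : Fin K, (if k ∈ S then q k else 1 - q k) :=
          Finset.prod_congr rfl fun k _ => hfac k
      _ = (∏ i ∈ S, q i) * ∏ j ∈ Sᶜ, (1 - q j) := by
          rw [← Finset.prod_mul_prod_compl S (fun k => if k ∈ S then q k else 1 - q k)]
          congr 1
          · exact Finset.prod_congr rfl fun i hi => if_pos hi
          · exact Finset.prod_congr rfl fun j hj => if_neg (Finset.mem_compl.mp hj)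
  -- value of `∫ G S`
  have hGval : ∀ S : Finset (Fin K),
      ∫ ω, G S ω ∂P = ∑ k ∈ S, ∫ ω, ‖X k ω‖ ^ 2 ∂P := by
    intro S
    set b := stdOrthonormalBasis ℝ E with hb
    have hnorm : ∀ x : E, ‖x‖ ^ 2 = ∑ m, (inner ℝ x (b m) : ℝ) ^ 2 := by
      intro x
      have h := b.sum_inner_mul_inner x x
      rw [real_inner_self_eq_norm_sq] at h
      rw [← h]
      exact Finset.sum_congr rfl fun m _ => by rw [real_inner_comm (b m) x, sq]
    have hYk : ∀ (k : Fin K) m, MemLp (fun ω => (inner ℝ (X k ω) (b m) : ℝ)) 2 P := by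
      intro k m
      have h := MemLp.const_inner (𝕜 := ℝ) (E := E) (b m) (hXL2 k)
      exact h.ae_eq (Filter.Eventually.of_forall fun ω => real_inner_comm _ _)
    have hYmean : ∀ (k : Fin K) m, ∫ ω, (inner ℝ (X k ω) (b m) : ℝ) ∂P = 0 := by
      intro k m
      have hint : Integrable (X k) P := (hXL2 k).integrable one_le_two
      calc ∫ ω, (inner ℝ (X k ω) (b m) : ℝ) ∂P
          = ∫ ω, (inner ℝ (b m) (X k ω) : ℝ) ∂P := by
            simp only [real_inner_comm]
        _ = (inner ℝ (b m) (∫ ω, X k ω ∂P) : ℝ) := integral_inner hint (b m)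
        _ = 0 := by rw [hXmean k, inner_zero_right]
    have hYindep : ∀ (i j : Fin K), i ≠ j → ∀ m,
        IndepFun (fun ω => (inner ℝ (X i ω) (b m) : ℝ))
          (fun ω => (inner ℝ (X j ω) (b m) : ℝ)) P := by
      intro i j hij m
      have hXij : IndepFun (X i) (X j) P := by
        have h := hindep.indepFun (show (Sum.inr i : Fin K ⊕ Fin K) ≠ Sum.inr j by
          simp [hij])
        exact h
      have hm : Measurable (fun y : E => (inner ℝ y (b m) : ℝ)) :=
        (continuous_id.inner continuous_const).measurable
      exact hXij.comp hm hm
    have hprodint : ∀ m, ∀ i ∈ S, ∀ j ∈ S,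
        Integrable (fun ω => (inner ℝ (X i ω) (b m) : ℝ) * (inner ℝ (X j ω) (b m) : ℝ)) P := by
      intro m i _ j _
      by_cases hij : i = j
      · subst hij
        have h := (hYk i m).integrable_sq
        refine h.congr (Filter.Eventually.of_forall fun ω => ?_)
        simp [sq]
      · exact (hYindep i j hij m).integrable_mul
          ((hYk i m).integrable one_le_two) ((hYk j m).integrable one_le_two)
    have hcross : ∀ m, ∀ i ∈ S, ∀ j ∈ S, i ≠ j →
        ∫ ω, (inner ℝ (X i ω) (b m) : ℝ) * (inner ℝ (X j ω) (b m) : ℝ) ∂P = 0 := by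
      intro m i _ j _ hij
      have h := (hYindep i j hij m).integral_mul_eq_mul_integral
        (hYk i m).aestronglyMeasurable (hYk j m).aestronglyMeasurable
      calc ∫ ω, (inner ℝ (X i ω) (b m) : ℝ) * (inner ℝ (X j ω) (b m) : ℝ) ∂P
          = ∫ ω, ((fun ω => (inner ℝ (X i ω) (b m) : ℝ))
              * fun ω => (inner ℝ (X j ω) (b m) : ℝ)) ω ∂P := rfl
        _ = (∫ ω, (inner ℝ (X i ω) (b m) : ℝ) ∂P)
              * ∫ ω, (inner ℝ (X j ω) (b m) : ℝ) ∂P := h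
        _ = 0 := by rw [hYmean i m, zero_mul]
    have hYmsum : ∀ m, MemLp (fun ω => ∑ k ∈ S, (inner ℝ (X k ω) (b m) : ℝ)) 2 P :=
      fun m => memLp_finset_sum S fun k _ => hYk k m
    calc ∫ ω, G S ω ∂P
        = ∫ ω, ∑ m, (∑ k ∈ S, (inner ℝ (X k ω) (b m) : ℝ)) ^ 2 ∂P := by
          refine integral_congr_ae (Filter.Eventually.of_forall fun ω => ?_)
          show ‖∑ k ∈ S, X k ω‖ ^ 2 = _
          rw [hnorm (∑ k ∈ S, X k ω)]
          exact Finset.sum_congr rfl fun m _ => by rw [sum_inner]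
      _ = ∑ m, ∫ ω, (∑ k ∈ S, (inner ℝ (X k ω) (b m) : ℝ)) ^ 2 ∂P :=
          integral_finset_sum _ fun m _ => (hYmsum m).integrable_sq
      _ = ∑ m, ∑ i ∈ S, ∑ j ∈ S,
            ∫ ω, (inner ℝ (X i ω) (b m) : ℝ) * (inner ℝ (X j ω) (b m) : ℝ) ∂P := by
          refine Finset.sum_congr rfl fun m _ => ?_
          have hpt2 : (fun ω => (∑ k ∈ S, (inner ℝ (X k ω) (b m) : ℝ)) ^ 2)
              = fun ω => ∑ i ∈ S, ∑ j ∈ S,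
                  (inner ℝ (X i ω) (b m) : ℝ) * (inner ℝ (X j ω) (b m) : ℝ) := by
            funext ω
            rw [sq, Finset.sum_mul_sum]
          rw [hpt2, integral_finset_sum _ fun i hi =>
            integrable_finset_sum _ fun j hj => hprodint m i hi j hj]
          exact Finset.sum_congr rfl fun i hi =>
            integral_finset_sum _ fun j hj => hprodint m i hi j hj
      _ = ∑ m, ∑ i ∈ S, ∫ ω, (inner ℝ (X i ω) (b m) : ℝ) ^ 2 ∂P := by
          refine Finset.sum_congr rfl fun m _ => Finset.sum_congr rfl fun i hi => ?_
          rw [Finset.sum_eq_single_of_mem i hi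
            (fun j hj hji => hcross m i hi j hj (Ne.symm hji))]
          refine integral_congr_ae (Filter.Eventually.of_forall fun ω => ?_)
          simp [sq]
      _ = ∑ i ∈ S, ∑ m, ∫ ω, (inner ℝ (X i ω) (b m) : ℝ) ^ 2 ∂P := Finset.sum_comm
      _ = ∑ k ∈ S, ∫ ω, ‖X k ω‖ ^ 2 ∂P := by
          refine Finset.sum_congr rfl fun i _ => ?_
          rw [← integral_finset_sum _ fun m _ => (hYk i m).integrable_sq]
          refine integral_congr_ae (Filter.Eventually.of_forall fun ω => ?_)
          simp [hnorm]
  -- pointwise identity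
  have hpt : ∀ ω, (if 1 ≤ ∑ k : Fin K, B k ω then
        ‖∑ k : Fin K, B k ω • X k ω‖ ^ 2 / (∑ k : Fin K, B k ω) ^ 2 else 0)
      = ∑ S ∈ (Finset.univ : Finset (Fin K)).powerset, ind S ω * (c S * G S ω) := by
    intro ω
    set T : Finset (Fin K) := Finset.univ.filter (fun k => B k ω = 1) with hT
    have hBsum : ∑ k : Fin K, B k ω = (T.card : ℝ) := by
      rw [← Finset.sum_filter_add_sum_filter_not Finset.univ (fun k => B k ω = 1)
        (fun k => B k ω)]
      have h2 : ∑ k ∈ Finset.univ.filter (fun k => ¬ B k ω = 1), B k ω = 0 :=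
        Finset.sum_eq_zero fun k hk =>
          (hB01 k ω).resolve_right (Finset.mem_filter.mp hk).2
      rw [h2, add_zero]
      rw [Finset.sum_congr rfl (fun k hk => (Finset.mem_filter.mp hk).2)]
      rw [Finset.sum_const, nsmul_eq_mul, mul_one, hT]
    have hXsum : ∑ k : Fin K, B k ω • X k ω = ∑ k ∈ T, X k ω := by
      rw [← Finset.sum_filter_add_sum_filter_not Finset.univ (fun k => B k ω = 1)
        (fun k => B k ω • X k ω)]
      have h2 : ∑ k ∈ Finset.univ.filter (fun k => ¬ B k ω = 1), B k ω • X k ω = 0 :=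
        Finset.sum_eq_zero fun k hk => by
          rw [(hB01 k ω).resolve_right (Finset.mem_filter.mp hk).2, zero_smul]
      rw [h2, add_zero]
      exact Finset.sum_congr rfl fun k hk => by
        rw [(Finset.mem_filter.mp hk).2, one_smul]
    have hindT : ∀ S : Finset (Fin K), ind S ω = if S = T then 1 else 0 := by
      intro S
      by_cases hST : S = T
      · rw [if_pos hST]
        have e1 : ∏ i ∈ S, B i ω = 1 :=
          Finset.prod_eq_one fun i hi => by
            rw [hST, hT] at hi
            exact (Finset.mem_filter.mp hi).2
        have e2 : ∏ j ∈ Sᶜ, (1 - B j ω) = 1 :=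
          Finset.prod_eq_one fun j hj => by
            have hj' : ¬ B j ω = 1 := by
              intro h1
              refine (Finset.mem_compl.mp hj) ?_
              rw [hST, hT]
              exact Finset.mem_filter.mpr ⟨Finset.mem_univ j, h1⟩
            rw [(hB01 j ω).resolve_right hj', sub_zero]
        simp only [hinddef, e1, e2, one_mul]
      · rw [if_neg hST]
        by_cases hsub : S ⊆ T
        · obtain ⟨k, hkT, hkS⟩ := Finset.exists_of_ssubset (hsub.ssubset_of_ne hST)
          have hk1 : B k ω = 1 := by
            rw [hT] at hkT
            exact (Finset.mem_filter.mp hkT).2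
          exact mul_eq_zero_of_right _
            (Finset.prod_eq_zero (Finset.mem_compl.mpr hkS) (by rw [hk1, sub_self]))
        · obtain ⟨k, hkS, hkT⟩ := Finset.not_subset.mp hsub
          have hk0 : B k ω = 0 := by
            refine (hB01 k ω).resolve_right fun h1 => hkT ?_
            rw [hT]
            exact Finset.mem_filter.mpr ⟨Finset.mem_univ k, h1⟩
          exact mul_eq_zero_of_left (Finset.prod_eq_zero hkS hk0) _
    have hcollapse : ∑ S ∈ (Finset.univ : Finset (Fin K)).powerset,
        ind S ω * (c S * G S ω) = c T * G T ω := by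
      have h1 : ∀ S ∈ (Finset.univ : Finset (Fin K)).powerset,
          ind S ω * (c S * G S ω) = if S = T then c S * G S ω else 0 := fun S _ => by
        rw [hindT S, ite_mul, one_mul, zero_mul]
      rw [Finset.sum_congr rfl h1, Finset.sum_ite_eq' _ T _,
        if_pos (Finset.mem_powerset.mpr (Finset.subset_univ T))]
    rw [hcollapse, hBsum, hXsum]
    by_cases hTe : T = ∅
    · norm_num [hTe, hc, hGdef]
    · have hcard : (1 : ℝ) ≤ (T.card : ℝ) := by
        exact_mod_cast Finset.card_pos.mpr (Finset.nonempty_iff_ne_empty.mpr hTe)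
      rw [if_pos hcard, hc, hGdef]
      simp only
      rw [one_div, inv_mul_eq_div]
  have hterm : ∀ S : Finset (Fin K),
      ∫ ω, ind S ω * (c S * G S ω) ∂P
        = ((∏ i ∈ S, q i) * ∏ j ∈ Sᶜ, (1 - q j)) * (c S * ∑ k ∈ S, ∫ ω, ‖X k ω‖ ^ 2 ∂P) := by
    intro S
    have hI : IndepFun (ind S) (fun ω => c S * G S ω) P :=
      (hindepSG S).comp measurable_id (measurable_const_mul (c S))
    have h := hI.integral_mul_eq_mul_integral (hindmeas S).aestronglyMeasurable
      ((measurable_const_mul (c S)).comp (hGmeas S)).aestronglyMeasurable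
    calc ∫ ω, ind S ω * (c S * G S ω) ∂P
        = ∫ ω, (ind S * fun ω => c S * G S ω) ω ∂P := rfl
      _ = (∫ ω, ind S ω ∂P) * ∫ ω, c S * G S ω ∂P := h
      _ = ((∏ i ∈ S, q i) * ∏ j ∈ Sᶜ, (1 - q j))
            * (c S * ∑ k ∈ S, ∫ ω, ‖X k ω‖ ^ 2 ∂P) := by
          rw [integral_const_mul, hindval S, hGval S]
  have hintS : ∀ S : Finset (Fin K), Integrable (fun ω => ind S ω * (c S * G S ω)) P := by
    intro S
    refine (((hGint S).const_mul (c S)).bdd_mul (c := 1) (hindmeas S).aestronglyMeasurable ?_)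
    refine Filter.Eventually.of_forall fun ω => ?_
    rcases hind01 S ω with h | h <;> simp [h]
  have hswap : ∀ F : Finset (Fin K) → Fin K → ℝ,
      ∑ S ∈ (Finset.univ : Finset (Fin K)).powerset, ∑ k ∈ S, F S k
        = ∑ k : Fin K, ∑ S ∈ (Finset.univ : Finset (Fin K)).powerset.filter
            (fun S => k ∈ S), F S k := by
    intro F
    calc ∑ S ∈ (Finset.univ : Finset (Fin K)).powerset, ∑ k ∈ S, F S k
        = ∑ S ∈ (Finset.univ : Finset (Fin K)).powerset,
            ∑ k : Fin K, if k ∈ S then F S k else 0 := by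
          refine Finset.sum_congr rfl fun S _ => ?_
          rw [Finset.sum_ite_mem, Finset.univ_inter]
      _ = ∑ k : Fin K, ∑ S ∈ (Finset.univ : Finset (Fin K)).powerset,
            if k ∈ S then F S k else 0 := Finset.sum_comm
      _ = ∑ k : Fin K, ∑ S ∈ (Finset.univ : Finset (Fin K)).powerset.filter
            (fun S => k ∈ S), F S k := by
          refine Finset.sum_congr rfl fun k _ => (Finset.sum_filter _ _).symm
  calc (∫ ω, (if 1 ≤ ∑ k : Fin K, B k ω then
        ‖∑ k : Fin K, B k ω • X k ω‖ ^ 2 / (∑ k : Fin K, B k ω) ^ 2 else 0) ∂P)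
      = ∫ ω, ∑ S ∈ (Finset.univ : Finset (Fin K)).powerset, ind S ω * (c S * G S ω) ∂P :=
        integral_congr_ae (Filter.Eventually.of_forall hpt)
    _ = ∑ S ∈ (Finset.univ : Finset (Fin K)).powerset,
          ∫ ω, ind S ω * (c S * G S ω) ∂P :=
        integral_finset_sum _ fun S _ => hintS S
    _ = ∑ S ∈ (Finset.univ : Finset (Fin K)).powerset,
          ((∏ i ∈ S, q i) * ∏ j ∈ Sᶜ, (1 - q j))
            * (c S * ∑ k ∈ S, ∫ ω, ‖X k ω‖ ^ 2 ∂P) :=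
        Finset.sum_congr rfl fun S _ => hterm S
    _ = ∑ S ∈ (Finset.univ : Finset (Fin K)).powerset, ∑ k ∈ S,
          (c S * (∏ i ∈ S, q i) * ∏ j ∈ Sᶜ, (1 - q j)) * ∫ ω, ‖X k ω‖ ^ 2 ∂P := by
        refine Finset.sum_congr rfl fun S _ => ?_
        rw [Finset.mul_sum, Finset.mul_sum]
        exact Finset.sum_congr rfl fun k _ => by ring
    _ = ∑ k : Fin K, ∑ S ∈ (Finset.univ : Finset (Fin K)).powerset.filter
          (fun S => k ∈ S),
          (c S * (∏ i ∈ S, q i) * ∏ j ∈ Sᶜ, (1 - q j)) * ∫ ω, ‖X k ω‖ ^ 2 ∂P :=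
        hswap _
    _ = ∑ k : Fin K, e k * ∫ ω, ‖X k ω‖ ^ 2 ∂P := by
        refine Finset.sum_congr rfl fun k _ => ?_
        rw [he k, Finset.sum_mul]
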